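/- First robustness of the augmented functional: if the true propensity functions p(X) (probability of S=1 given X) and e_{s,a}(X) are used but an arbitrary (possibly incorrect) outcome function g*_{s,a}(X) replaces g_{s,a}(X), the population value of the augmented expression (1/ζ)·E[ I(S=1)·g*_{s,a}(X) + w_{s,a}(X,S,A)·(Y − g*_{s,a}(X)) ] still equals γ_{s,a}, where w_{s,a}(X,S,A) = I(S=s, A=a)·p_1(X)/(e_{s,a}(X)·p_s(X)). -/

import Mathlib

open scoped Classical BigOperators
open Finset

noncomputable section

/-- Indicator of a proposition. -/
def ind (P : Prop) : ℝ := if P then 1 else 0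

/-- Expectation with respect to weights `p` on a finite outcome space. -/
def pexp {Ω : Type*} [Fintype Ω] (p : Ω → ℝ) (f : Ω → ℝ) : ℝ := ∑ ω, p ω * f ω

/-- Probability of an event. -/
def prob {Ω : Type*} [Fintype Ω] (p : Ω → ℝ) (B : Ω → Prop) : ℝ :=
  pexp p (fun ω => ind (B ω))

/-- Conditional expectation of `f` given event `B`. -/
def cexp {Ω : Type*} [Fintype Ω] (p : Ω → ℝ) (f : Ω → ℝ) (B : Ω → Prop) : ℝ :=
  pexp p (fun ω => f ω * ind (B ω)) / prob p B

/-- Conditional probability of `B` given `C`. -/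
def cprob {Ω : Type*} [Fintype Ω] (p : Ω → ℝ) (B C : Ω → Prop) : ℝ :=
  prob p (fun ω => B ω ∧ C ω) / prob p C

/-- Conditional outcome mean `g_{s,a}(x) = E[Y | X = x, S = s, A = a]`. -/
def gfun {Ω 𝒳 : Type*} [Fintype Ω] (p : Ω → ℝ) (X : Ω → 𝒳) (S A : Ω → ℕ)
    (Y : Ω → ℝ) (s a : ℕ) (x : 𝒳) : ℝ :=
  cexp p Y (fun ω => X ω = x ∧ S ω = s ∧ A ω = a)

/-- Standardized functional `γ_{s,a} = E[ E[Y | X, S=s, A=a] | S=1 ]`. -/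
def gam {Ω 𝒳 : Type*} [Fintype Ω] (p : Ω → ℝ) (X : Ω → 𝒳) (S A : Ω → ℕ)
    (Y : Ω → ℝ) (s a : ℕ) : ℝ :=
  cexp p (fun ω => gfun p X S A Y s a (X ω)) (fun ω => S ω = 1)

/-- Participation probability `p_s(x) = Pr[S = s | X = x]`. -/
def psel {Ω 𝒳 : Type*} [Fintype Ω] (p : Ω → ℝ) (X : Ω → 𝒳) (S : Ω → ℕ)
    (s : ℕ) (x : 𝒳) : ℝ :=
  cprob p (fun ω => S ω = s) (fun ω => X ω = x)

/-- Treatment probability `e_{s,a}(x) = Pr[A = a | X = x, S = s]`. -/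
def etrt {Ω 𝒳 : Type*} [Fintype Ω] (p : Ω → ℝ) (X : Ω → 𝒳) (S A : Ω → ℕ)
    (s a : ℕ) (x : 𝒳) : ℝ :=
  cprob p (fun ω => A ω = a) (fun ω => X ω = x ∧ S ω = s)

/-- Weight `w_{s,a}(X,S,A) = I(S=s, A=a) p_1(X) / (e_{s,a}(X) p_s(X))`. -/
def wgt {Ω 𝒳 : Type*} [Fintype Ω] (p : Ω → ℝ) (X : Ω → 𝒳) (S A : Ω → ℕ)
    (s a : ℕ) (ω : Ω) : ℝ :=
  ind (S ω = s ∧ A ω = a) * psel p X S 1 (X ω) /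
    (etrt p X S A s a (X ω) * psel p X S s (X ω))

/-- Influence function `Γ_{s,a}(O)`. -/
def Gam {Ω 𝒳 : Type*} [Fintype Ω] (p : Ω → ℝ) (X : Ω → 𝒳) (S A : Ω → ℕ)
    (Y : Ω → ℝ) (s a : ℕ) (ω : Ω) : ℝ :=
  (1 / prob p (fun ω' => S ω' = 1)) *
    (ind (S ω = 1) * (gfun p X S A Y s a (X ω) - gam p X S A Y s a)
      + wgt p X S A s a ω * (Y ω - gfun p X S A Y s a (X ω)))

/-- Variance of `f` under `p`. -/
def pvar {Ω : Type*} [Fintype Ω] (p : Ω → ℝ) (f : Ω → ℝ) : ℝ :=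
  pexp p (fun ω => (f ω - pexp p f) ^ 2)

/-!
Condition on `X`. On the fiber `X = x` the augmentation term has mean
`r(x) · (g(x) - g*(x)) · P(X = x, S = s, A = a)` with `r = p₁ / (e_{s,a} p_s)`, and with the true
propensities `r(x) · P(X = x, S = s, A = a) = P(X = x, S = 1)`. So the fiber contribution is
`g*(x) P(X = x, S = 1) + (g(x) - g*(x)) P(X = x, S = 1) = g(x) P(X = x, S = 1)`, whatever `g*` is,
and summing over `x` gives `E[g(X) I(S = 1)] = ζ γ_{s,a}`.
-/

lemma ind_nonneg (P : Prop) : 0 ≤ ind P := by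
  unfold ind; split <;> norm_num

lemma ind_and (P Q : Prop) : ind (P ∧ Q) = ind P * ind Q := by
  unfold ind
  by_cases hP : P <;> by_cases hQ : Q <;> simp [hP, hQ]

section Expectation

variable {Ω : Type*} [Fintype Ω] (p : Ω → ℝ)

lemma pexp_add (f g : Ω → ℝ) : pexp p (fun ω => f ω + g ω) = pexp p f + pexp p g := by
  simp only [pexp, mul_add, sum_add_distrib]

lemma pexp_sub (f g : Ω → ℝ) : pexp p (fun ω => f ω - g ω) = pexp p f - pexp p g := by
  simp only [pexp, mul_sub, sum_sub_distrib]

lemma pexp_const_mul (c : ℝ) (f : Ω → ℝ) : pexp p (fun ω => c * f ω) = c * pexp p f := by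
  simp only [pexp, mul_sum]
  exact sum_congr rfl fun ω _ => by ring

lemma pexp_eq_sum_fiber {𝒳 : Type*} (X : Ω → 𝒳) (F : Ω → ℝ) :
    pexp p F = ∑ x ∈ univ.image X, pexp p (fun ω => F ω * ind (X ω = x)) := by
  simp only [pexp, ind, mul_ite, mul_one, mul_zero, ← sum_filter]
  exact (sum_fiberwise_of_maps_to (fun ω _ => mem_image_of_mem X (mem_univ ω)) _).symm

lemma prob_congr {B C : Ω → Prop} (h : ∀ ω, B ω ↔ C ω) : prob p B = prob p C :=
  congrArg (prob p) (funext fun ω => propext (h ω))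

variable {p} (hp0 : ∀ ω, 0 ≤ p ω)
include hp0

lemma prob_nonneg (B : Ω → Prop) : 0 ≤ prob p B :=
  sum_nonneg fun ω _ => mul_nonneg (hp0 ω) (ind_nonneg _)

lemma mul_ind_eq_zero_of_prob_eq_zero {B : Ω → Prop} (h : prob p B = 0) (ω : Ω) :
    p ω * ind (B ω) = 0 :=
  (sum_eq_zero_iff_of_nonneg fun ω _ => mul_nonneg (hp0 ω) (ind_nonneg (B ω))).mp h ω
    (mem_univ ω)

lemma pexp_mul_ind (f : Ω → ℝ) (B : Ω → Prop) :
    pexp p (fun ω => f ω * ind (B ω)) = cexp p f B * prob p B := by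
  by_cases h : prob p B = 0
  · rw [h, mul_zero]
    refine sum_eq_zero fun ω _ => ?_
    rw [mul_left_comm, mul_ind_eq_zero_of_prob_eq_zero hp0 h ω, mul_zero]
  · rw [cexp, div_mul_cancel₀ _ h]

lemma cprob_mul_prob (B C : Ω → Prop) :
    cprob p B C * prob p C = prob p (fun ω => B ω ∧ C ω) := by
  have hprob : prob p (fun ω => B ω ∧ C ω) = pexp p (fun ω => ind (B ω) * ind (C ω)) := by
    simp only [prob, ind_and]
  rw [cprob, hprob]
  exact (pexp_mul_ind hp0 (fun ω => ind (B ω)) C).symm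

end Expectation

section Propensities

variable {Ω 𝒳 : Type*} [Fintype Ω] {p : Ω → ℝ} (hp0 : ∀ ω, 0 ≤ p ω)
  (X : Ω → 𝒳) (S A : Ω → ℕ)
include hp0

lemma psel_mul_prob (t : ℕ) (x : 𝒳) :
    psel p X S t x * prob p (fun ω => X ω = x) = prob p (fun ω => X ω = x ∧ S ω = t) := by
  rw [psel, cprob_mul_prob hp0]
  exact prob_congr p fun ω => and_comm

lemma etrt_mul_prob (s a : ℕ) (x : 𝒳) :
    etrt p X S A s a x * prob p (fun ω => X ω = x ∧ S ω = s) =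
      prob p (fun ω => X ω = x ∧ S ω = s ∧ A ω = a) := by
  rw [etrt, cprob_mul_prob hp0]
  exact prob_congr p fun ω => by tauto

lemma psel_div_mul_prob_eq_prob {s a : ℕ} {x : 𝒳}
    (hposS : 0 < prob p (fun ω => X ω = x ∧ S ω = 1) → 0 < psel p X S s x)
    (hposA : 0 < prob p (fun ω => X ω = x ∧ S ω = 1) → 0 < etrt p X S A s a x) :
    psel p X S 1 x / (etrt p X S A s a x * psel p X S s x) *
        prob p (fun ω => X ω = x ∧ S ω = s ∧ A ω = a) =
      prob p (fun ω => X ω = x ∧ S ω = 1) := by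
  rcases (prob_nonneg hp0 (fun ω => X ω = x ∧ S ω = 1)).eq_or_lt with h0 | hpos
  · have hsel : psel p X S 1 x = 0 := by
      rw [psel, cprob, prob_congr p fun ω => and_comm, ← h0, zero_div]
    rw [hsel, zero_div, zero_mul, ← h0]
  · have hS := hposS hpos
    have hA := hposA hpos
    rw [← etrt_mul_prob hp0, ← psel_mul_prob hp0, ← psel_mul_prob hp0]
    field_simp

end Propensities

lemma pexp_augmented_mul_ind {Ω 𝒳 : Type*} [Fintype Ω] {p : Ω → ℝ} (hp0 : ∀ ω, 0 ≤ p ω)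
    (X : Ω → 𝒳) (S A : Ω → ℕ) (Y : Ω → ℝ) (s a : ℕ) (gstar : 𝒳 → ℝ) (x : 𝒳)
    (hposS : 0 < prob p (fun ω => X ω = x ∧ S ω = 1) → 0 < psel p X S s x)
    (hposA : 0 < prob p (fun ω => X ω = x ∧ S ω = 1) → 0 < etrt p X S A s a x) :
    pexp p (fun ω => (ind (S ω = 1) * gstar (X ω) + wgt p X S A s a ω * (Y ω - gstar (X ω))) *
        ind (X ω = x)) =
      pexp p (fun ω => gfun p X S A Y s a (X ω) * ind (S ω = 1) * ind (X ω = x)) := by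
  set r := psel p X S 1 x / (etrt p X S A s a x * psel p X S s x)
  have hlhs : ∀ ω, (ind (S ω = 1) * gstar (X ω) + wgt p X S A s a ω * (Y ω - gstar (X ω))) *
      ind (X ω = x) = gstar x * ind (X ω = x ∧ S ω = 1) +
        r * (Y ω * ind (X ω = x ∧ S ω = s ∧ A ω = a) -
          gstar x * ind (X ω = x ∧ S ω = s ∧ A ω = a)) := by
    intro ω
    by_cases hx : X ω = x
    · simp only [wgt, ind_and, hx, r]
      ring
    · simp [ind, hx]
  have hrhs : ∀ ω, gfun p X S A Y s a (X ω) * ind (S ω = 1) * ind (X ω = x) =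
      gfun p X S A Y s a x * ind (X ω = x ∧ S ω = 1) := by
    intro ω
    by_cases hx : X ω = x
    · simp only [ind_and, hx]
      ring
    · simp [ind, hx]
  simp only [hlhs, hrhs, pexp_add, pexp_sub, pexp_const_mul,
    pexp_mul_ind hp0 Y (fun ω => X ω = x ∧ S ω = s ∧ A ω = a)]
  change gstar x * prob p _ + r * (gfun p X S A Y s a x * prob p _ - gstar x * prob p _) =
    gfun p X S A Y s a x * prob p _
  linear_combination (gfun p X S A Y s a x - gstar x) *
    psel_div_mul_prob_eq_prob hp0 X S A hposS hposA

theorem statement6_general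
    {Ω 𝒳 : Type*} [Fintype Ω] (p : Ω → ℝ)
    (hp0 : ∀ ω, 0 ≤ p ω)
    (X : Ω → 𝒳) (S A : Ω → ℕ) (Y : Ω → ℝ) (s a : ℕ) (gstar : 𝒳 → ℝ)
    (hposS : ∀ x, 0 < prob p (fun ω => X ω = x ∧ S ω = 1) → 0 < psel p X S s x)
    (hposA : ∀ x, 0 < prob p (fun ω => X ω = x ∧ S ω = 1) → 0 < etrt p X S A s a x) :
    (1 / prob p (fun ω => S ω = 1)) *
        pexp p (fun ω =>
          ind (S ω = 1) * gstar (X ω) + wgt p X S A s a ω * (Y ω - gstar (X ω))) =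
      gam p X S A Y s a := by
  have hmean : pexp p (fun ω =>
        ind (S ω = 1) * gstar (X ω) + wgt p X S A s a ω * (Y ω - gstar (X ω))) =
      pexp p (fun ω => gfun p X S A Y s a (X ω) * ind (S ω = 1)) := by
    rw [pexp_eq_sum_fiber p X, pexp_eq_sum_fiber p X]
    exact sum_congr rfl fun x _ =>
      pexp_augmented_mul_ind hp0 X S A Y s a gstar x (hposS x) (hposA x)
  rw [hmean, gam, cexp, one_div_mul_eq_div]

theorem statement6
    {Ω 𝒳 : Type*} [Fintype Ω] (p : Ω → ℝ)
    (hp0 : ∀ ω, 0 ≤ p ω) (hp1 : ∑ ω, p ω = 1)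
    (X : Ω → 𝒳) (S A : Ω → ℕ) (Y : Ω → ℝ) (s a : ℕ) (gstar : 𝒳 → ℝ)
    (hS : 0 < prob p (fun ω => S ω = 1))
    (hposS : ∀ x, 0 < prob p (fun ω => X ω = x ∧ S ω = 1) → 0 < psel p X S s x)
    (hposA : ∀ x, 0 < prob p (fun ω => X ω = x ∧ S ω = 1) → 0 < etrt p X S A s a x) :
    (1 / prob p (fun ω => S ω = 1)) *
        pexp p (fun ω =>
          ind (S ω = 1) * gstar (X ω) + wgt p X S A s a ω * (Y ω - gstar (X ω))) =
      gam p X S A Y s a :=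
  statement6_general p hp0 X S A Y s a gstar hposS hposA
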